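/- Let (G, 𝒫, 𝒯) be an instance of Partitioned Vertex Cover and let H be the Popular Matching instance constructed from it. If M is a popular matching in H and U := {i ∈ V(G) : {a_i, b_i} ∈ M}, then for every triple T ∈ 𝒯 it holds that |U ∩ T| = 2. -/

import Mathlib

open SimpleGraph

universe u

/-- A matching: a set of edges of `G` that are pairwise vertex-disjoint. -/
def IsMatching {W : Type u} (G : SimpleGraph W) (M : Set (Sym2 W)) : Prop :=
  M ⊆ G.edgeSet ∧ ∀ e ∈ M, ∀ e' ∈ M, e ≠ e' → ∀ v : W, v ∈ e → v ∉ e'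

/-- `v` is matched by `M`. -/
def Matched {W : Type u} (M : Set (Sym2 W)) (v : W) : Prop := ∃ w : W, s(v, w) ∈ M

open scoped Classical in
/-- `rank G pref M v = pref v (M(v))`, with the convention `|N(v)|+1` if `v` is unmatched. -/
noncomputable def rank {W : Type u} (G : SimpleGraph W) (pref : W → W → ℕ)
    (M : Set (Sym2 W)) (v : W) : ℕ :=
  if h : ∃ w : W, s(v, w) ∈ M then pref v h.choose else (G.neighborSet v).ncard + 1

/-- The number of vertices preferring `M` over `M'`. -/
noncomputable def vote {W : Type u} (G : SimpleGraph W) (pref : W → W → ℕ)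
    (M M' : Set (Sym2 W)) : ℕ :=
  {v : W | rank G pref M v < rank G pref M' v}.ncard

/-- A popular matching: no other matching is more popular. -/
def IsPopular {W : Type u} (G : SimpleGraph W) (pref : W → W → ℕ) (M : Set (Sym2 W)) : Prop :=
  IsMatching G M ∧
    ∀ M' : Set (Sym2 W), IsMatching G M' → vote G pref M' M ≤ vote G pref M M'

/-- Each vertex has a strict preference list: `pref v` is a bijection from the
neighborhood of `v` onto `{1, …, |N(v)|}`. -/
def HasPref {W : Type u} (G : SimpleGraph W) (pref : W → W → ℕ) : Prop :=
  ∀ v : W, Set.BijOn (pref v) (G.neighborSet v) (Set.Icc 1 (G.neighborSet v).ncard)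

/-- The edge `e ∉ M` is labeled `+2` by `label_M` (given rank function `rk`):
both endpoints prefer each other over their status in `M`. -/
def EdgePlus {W : Type u} (pref : W → W → ℕ) (rk : W → ℕ) (e : Sym2 W) : Prop :=
  ∃ x y : W, e = s(x, y) ∧ pref x y < rk x ∧ pref y x < rk y

/-- The edge `e ∉ M` is labeled `-2` by `label_M` (given rank function `rk`):
both endpoints prefer their status in `M` over each other. -/
def EdgeMinus {W : Type u} (pref : W → W → ℕ) (rk : W → ℕ) (e : Sym2 W) : Prop :=
  ∃ x y : W, e = s(x, y) ∧ rk x < pref x y ∧ rk y < pref y x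

/-- The graph `G_M`: the spanning subgraph of `G` consisting of the edges of `M`
together with the edges not labeled `-2`. -/
def GMgraph {W : Type u} (G : SimpleGraph W) (pref : W → W → ℕ) (M : Set (Sym2 W)) :
    SimpleGraph W where
  Adj x y := G.Adj x y ∧ (s(x, y) ∈ M ∨ ¬ EdgeMinus pref (rank G pref M) s(x, y))
  symm := by
    constructor
    intro x y h
    refine ⟨h.1.symm, ?_⟩
    rw [Sym2.eq_swap]
    exact h.2
  loopless := by
    constructor
    intro x h
    exact G.irrefl h.1

/-- Consecutive edges alternate between `M` and non-`M`. -/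
def altRel {W : Type u} (M : Set (Sym2 W)) (e e' : Sym2 W) : Prop := e ∈ M ↔ e' ∉ M

/-- An alternating path (with respect to `M`) in a graph `G'`. -/
def IsAltPath {W : Type u} (M : Set (Sym2 W)) {G' : SimpleGraph W} {x y : W}
    (p : G'.Walk x y) : Prop :=
  p.IsPath ∧ List.Chain' (altRel M) p.edges ∧
    (∀ e, p.edges.head? = some e → e ∉ M → ¬ Matched M x) ∧
    (∀ e, p.edges.getLast? = some e → e ∉ M → ¬ Matched M y)

/-- An alternating cycle (with respect to `M`) in a graph `G'`:
the edges alternate cyclically between `M` and non-`M`. -/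
def IsAltCycle {W : Type u} (M : Set (Sym2 W)) {G' : SimpleGraph W} {x : W}
    (p : G'.Walk x x) : Prop :=
  p.IsCycle ∧ List.Chain' (altRel M) (p.edges ++ p.edges.take 1)

/-- `l` contains at least one edge labeled `+2`. -/
def OnePlusEdge {W : Type u} (pref : W → W → ℕ) (rk : W → ℕ) (l : List (Sym2 W)) : Prop :=
  ∃ e ∈ l, EdgePlus pref rk e

/-- `l` contains at least two edges labeled `+2`. -/
def TwoPlusEdges {W : Type u} (pref : W → W → ℕ) (rk : W → ℕ) (l : List (Sym2 W)) : Prop :=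
  ∃ e ∈ l, ∃ e' ∈ l, e ≠ e' ∧ EdgePlus pref rk e ∧ EdgePlus pref rk e'

/-- A vertex cover. -/
def IsVC {V : Type u} (G : SimpleGraph V) (U : Set V) : Prop :=
  ∀ ⦃x y : V⦄, G.Adj x y → x ∈ U ∨ y ∈ U
/-- An instance of Partitioned Vertex Cover: `G` is a finite simple graph, `P` is a
collection of pairwise disjoint edges of `G`, `T` is a collection of pairwise disjoint
3-element vertex sets each inducing a triangle in `G`, and every vertex of `G` lies in
exactly one member of `P ∪ T`. -/
def IsPVC {V : Type u} (G : SimpleGraph V) (P : Set (Sym2 V)) (T : Set (Finset V)) : Prop :=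
  Finite V ∧
  P ⊆ G.edgeSet ∧
  (∀ e ∈ P, ∀ e' ∈ P, e ≠ e' → ∀ v : V, v ∈ e → v ∉ e') ∧
  (∀ t ∈ T, t.card = 3) ∧
  (∀ t ∈ T, ∀ x ∈ t, ∀ y ∈ t, x ≠ y → G.Adj x y) ∧
  (∀ t ∈ T, ∀ t' ∈ T, t ≠ t' → ∀ v : V, v ∈ t → v ∉ t') ∧
  (∀ v : V, (∃ e ∈ P, v ∈ e) ∨ (∃ t ∈ T, v ∈ t)) ∧
  (∀ v : V, ¬ ((∃ e ∈ P, v ∈ e) ∧ (∃ t ∈ T, v ∈ t)))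

/-- A solution of a Partitioned Vertex Cover instance: a vertex cover `U` with
`|U ∩ P| = 1` for every pair `P` and `|U ∩ T| = 2` for every triple `T`. -/
def IsPVCSolution {V : Type u} (G : SimpleGraph V) (P : Set (Sym2 V)) (T : Set (Finset V))
    (U : Set V) : Prop :=
  IsVC G U ∧
  (∀ e ∈ P, {x : V | x ∈ e ∧ x ∈ U}.ncard = 1) ∧
  (∀ t ∈ T, {x : V | x ∈ t ∧ x ∈ U}.ncard = 2)

/-- The vertices of the graph `H` built from a Partitioned Vertex Cover instance:
`a i`, `b i`, `c i`, `d i` for a vertex `i` of `G`; `u i j` is the vertex `u^e_i` for the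
edge `e = {i,j}` of `G`; `f i j` is the vertex `f_{ij}` for the pair `{i,j} ∈ P`. -/
inductive Gad (V : Type u) : Type u where
  | a : V → Gad V
  | b : V → Gad V
  | c : V → Gad V
  | d : V → Gad V
  | u : V → V → Gad V
  | f : V → V → Gad V
deriving DecidableEq

/-- Which formal gadget vertices are really vertices of `H`. -/
def Gad.valid {V : Type u} (G : SimpleGraph V) (P : Set (Sym2 V)) : Gad V → Prop
  | .u i j => G.Adj i j
  | .f i j => s(i, j) ∈ P
  | _ => True

/-- The edges of `H`, up to symmetry. -/
inductive HBase {V : Type u} (G : SimpleGraph V) (P : Set (Sym2 V)) (T : Set (Finset V)) :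
    Gad V → Gad V → Prop where
  | da (i : V) : HBase G P T (.d i) (.a i)
  | ab (i : V) : HBase G P T (.a i) (.b i)
  | ac (i : V) : HBase G P T (.a i) (.c i)
  | bc (i : V) : HBase G P T (.b i) (.c i)
  | uu {i j : V} (h : G.Adj i j) : HBase G P T (.u i j) (.u j i)
  | bu {i j : V} (h : G.Adj i j) : HBase G P T (.b i) (.u i j)
  | df {i j : V} (h : s(i, j) ∈ P) : HBase G P T (.d i) (.f i j)
  | fc {i j : V} (h : s(i, j) ∈ P) : HBase G P T (.f i j) (.c j)
  | cd {i j : V} (h : s(i, j) ∈ P) : HBase G P T (.c i) (.d j)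
  | dd {i j : V} {t : Finset V} (ht : t ∈ T) (hi : i ∈ t) (hj : j ∈ t) (hne : i ≠ j) :
      HBase G P T (.d i) (.d j)
  | cc {i j : V} {t : Finset V} (ht : t ∈ T) (hi : i ∈ t) (hj : j ∈ t) (hne : i ≠ j) :
      HBase G P T (.c i) (.c j)

/-- The graph `H` of the Popular Matching instance built from `(G, P, T)`. -/
def Hgraph {V : Type u} (G : SimpleGraph V) (P : Set (Sym2 V)) (T : Set (Finset V)) :
    SimpleGraph {g : Gad V // Gad.valid G P g} where
  Adj x y := x ≠ y ∧ (HBase G P T x.1 y.1 ∨ HBase G P T y.1 x.1)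
  symm := by
    constructor
    intro _ _ h
    exact ⟨h.1.symm, h.2.symm⟩
  loopless := by
    constructor
    intro _ h
    exact h.1 rfl

/-- The Popular Matching instance (graph together with preference lists) constructed
from a Partitioned Vertex Cover instance `(G, P, T)`.  The field `pref` gives the
preference lists; all its values on the neighborhoods in `H` are pinned down, except
the ranks that `b i` assigns to the vertices `u^e_i`, which form an arbitrary fixed
bijection onto `{2, …, deg_G(i) + 1}`. -/
structure Reduction (V : Type u) [LinearOrder V] : Type u where
  G : SimpleGraph V
  P : Set (Sym2 V)
  T : Set (Finset V)
  ispvc : IsPVC G P T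
  pref : Gad V → Gad V → ℕ
  pref_ab : ∀ i : V, pref (.a i) (.b i) = 1
  pref_ac : ∀ i : V, pref (.a i) (.c i) = 2
  pref_ad : ∀ i : V, pref (.a i) (.d i) = 3
  pref_ba : ∀ i : V, pref (.b i) (.a i) = 1
  pref_bu : ∀ i : V, Set.BijOn (pref (.b i)) {g : Gad V | ∃ j : V, G.Adj i j ∧ g = .u i j}
      (Set.Icc 2 ((G.neighborSet i).ncard + 1))
  pref_bc : ∀ i : V, pref (.b i) (.c i) = (G.neighborSet i).ncard + 2
  pref_ca : ∀ i : V, pref (.c i) (.a i) = 1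
  pref_cb : ∀ i : V, pref (.c i) (.b i) = 2
  pref_da : ∀ i : V, pref (.d i) (.a i) = 1
  pref_uu : ∀ i j : V, G.Adj i j → pref (.u i j) (.u j i) = 1
  pref_ub : ∀ i j : V, G.Adj i j → pref (.u i j) (.b i) = 2
  pref_cf : ∀ i j : V, s(i, j) ∈ P → pref (.c i) (.f j i) = 3
  pref_cd : ∀ i j : V, s(i, j) ∈ P → pref (.c i) (.d j) = 4
  pref_dc : ∀ i j : V, s(i, j) ∈ P → pref (.d i) (.c j) = 2
  pref_df : ∀ i j : V, s(i, j) ∈ P → pref (.d i) (.f i j) = 3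
  pref_fd : ∀ i j : V, s(i, j) ∈ P → pref (.f i j) (.d i) = 1
  pref_fc : ∀ i j : V, s(i, j) ∈ P → pref (.f i j) (.c j) = 2
  pref_tri : ∀ t ∈ T, ∀ i j k : V, t = {i, j, k} → i < j → j < k →
    pref (.c i) (.c k) = 3 ∧ pref (.c i) (.c j) = 4 ∧
    pref (.c j) (.c i) = 3 ∧ pref (.c j) (.c k) = 4 ∧
    pref (.c k) (.c j) = 3 ∧ pref (.c k) (.c i) = 4 ∧
    pref (.d i) (.d j) = 2 ∧ pref (.d i) (.d k) = 3 ∧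
    pref (.d j) (.d k) = 2 ∧ pref (.d j) (.d i) = 3 ∧
    pref (.d k) (.d i) = 2 ∧ pref (.d k) (.d j) = 3

namespace Reduction

variable {V : Type u} [LinearOrder V] (R : Reduction V)

/-- The vertex set of `H`. -/
abbrev HV : Type u := {g : Gad V // Gad.valid R.G R.P g}

/-- The graph `H`. -/
def H : SimpleGraph R.HV := Hgraph R.G R.P R.T

/-- The preference lists of `H`, as a function on its vertices. -/
def prefH : R.HV → R.HV → ℕ := fun x y => R.pref x.1 y.1

/-- The vertex `a_i` of `H`. -/
def va (i : V) : R.HV := ⟨.a i, trivial⟩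
/-- The vertex `b_i` of `H`. -/
def vb (i : V) : R.HV := ⟨.b i, trivial⟩
/-- The vertex `c_i` of `H`. -/
def vc (i : V) : R.HV := ⟨.c i, trivial⟩
/-- The vertex `d_i` of `H`. -/
def vd (i : V) : R.HV := ⟨.d i, trivial⟩
/-- The vertex `u^e_i` of `H`, for an edge `e = {i,j}` of `G`. -/
def vu (i j : V) (h : R.G.Adj i j) : R.HV := ⟨.u i j, h⟩
/-- The vertex `f_{ij}` of `H`, for a pair `{i,j} ∈ P`. -/
def vf (i j : V) (h : s(i, j) ∈ R.P) : R.HV := ⟨.f i j, h⟩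

/-- The matching `M*` in `H` constructed from a solution `U`. -/
def Mstar (U : Set V) : Set (Sym2 R.HV) :=
  {e : Sym2 R.HV |
    (∃ (i j : V) (h : R.G.Adj i j), e = s(R.vu i j h, R.vu j i h.symm)) ∨
    (∃ (x y : V) (h : s(x, y) ∈ R.P) (h' : s(y, x) ∈ R.P), x ∉ U ∧ y ∈ U ∧
      (e = s(R.va x, R.vd x) ∨ e = s(R.vb x, R.vc x) ∨ e = s(R.va y, R.vb y) ∨
       e = s(R.vf x y h, R.vc y) ∨ e = s(R.vf y x h', R.vd y))) ∨
    (∃ t ∈ R.T, ∃ x y z : V, t = {x, y, z} ∧ x ∉ U ∧ y ∈ U ∧ z ∈ U ∧ y ≠ z ∧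
      R.pref (.d x) (.d y) < R.pref (.d x) (.d z) ∧
      (e = s(R.va x, R.vd x) ∨ e = s(R.vb x, R.vc x) ∨ e = s(R.va y, R.vb y) ∨
       e = s(R.va z, R.vb z) ∨ e = s(R.vc y, R.vc z) ∨ e = s(R.vd y, R.vd z)))}

end Reduction

/-- The vertex set of the Pair Selector gadget associated with a pair `{i,j}`. -/
def pairGadget {V : Type u} (i j : V) : Set (Gad V) :=
  {g : Gad V | ∃ x : V, (x = i ∨ x = j) ∧ (g = .a x ∨ g = .b x ∨ g = .c x ∨ g = .d x)} ∪
    {Gad.f i j, Gad.f j i}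

/-- The vertex set of the Triple Selector gadget associated with a triple `t`. -/
def tripleGadget {V : Type u} (t : Finset V) : Set (Gad V) :=
  {g : Gad V | ∃ x ∈ t, g = .a x ∨ g = .b x ∨ g = .c x ∨ g = .d x}

/-!
In a popular matching `M` every vertex `i` of `G` is *open* (`a_i b_i ∈ M`) or *closed*
(`a_i d_i, b_i c_i ∈ M`), and every triple has exactly one closed vertex. Each step is an
exchange argument: force a small matching into `M` and compare the vertices that improve with
those that get worse.
* If `a_i b_i ∉ M`, then `a_i b_i` is a blocking edge. Popularity rules it out when `a_i` or
  `b_i` is unmatched, and also when `b_i` is matched to some `u^e_i`, because then `u^e_i u^e_j`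
  is a second blocking edge next to it. What is left is `b_i c_i, a_i d_i ∈ M`.
* If two adjacent vertices `i, j` are closed, switching `a, b, c` of both gadgets to `c, u^e, a`
  improves six vertices, and only `d_i, d_j, u^e_i, u^e_j` get worse.
* If a whole triple is open, then `c_i, c_j, c_k` can only be matched among themselves, and a
  triangle with cyclic preferences admits no popular matching.
-/

lemma mk_mem_comm {W : Type u} {M : Set (Sym2 W)} {v w : W} : s(v, w) ∈ M ↔ s(w, v) ∈ M := by
  rw [Sym2.eq_swap]

theorem Finset.exists_lt_lt_eq_of_card_eq_three {α : Type*} [LinearOrder α] {t : Finset α}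
    (h : t.card = 3) : ∃ i j k, i < j ∧ j < k ∧ t = {i, j, k} := by
  set f := t.orderEmbOfFin h
  refine ⟨f 0, f 1, f 2, f.strictMono (by decide), f.strictMono (by decide), ?_⟩
  have hrange : Set.range f = {f 0, f 1, f 2} := by
    ext v
    simp [Fin.exists_fin_succ, eq_comm]
  rw [← Finset.coe_inj, ← Finset.range_orderEmbOfFin t h, hrange]
  simp

namespace IsMatching

variable {W : Type u} {G : SimpleGraph W} {M : Set (Sym2 W)} {v w w' : W}

lemma partner_unique (hM : IsMatching G M) (h : s(v, w) ∈ M) (h' : s(v, w') ∈ M) :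
    w = w' := by
  by_contra hne
  exact hM.2 _ h _ h' (fun he => hne (Sym2.congr_right.mp he)) v (Sym2.mem_mk_left v w)
    (Sym2.mem_mk_left v w')

lemma adj (hM : IsMatching G M) (h : s(v, w) ∈ M) : G.Adj v w :=
  G.mem_edgeSet.mp (hM.1 h)

lemma ncard_partners_le_one (hM : IsMatching G M) (v : W) : {w | s(v, w) ∈ M}.ncard ≤ 1 :=
  have hsub : {w | s(v, w) ∈ M}.Subsingleton := fun _ h _ h' => hM.partner_unique h h'
  (Set.ncard_le_one_iff hsub.finite).mpr fun h h' => hsub h h'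

lemma not_matched_of_mem {x y z : W} (hM : IsMatching G M) (hxy : s(x, y) ∈ M)
    (hz : ∀ w, s(z, w) ∈ M → w = x ∨ w = y) (hzx : z ≠ x) (hzy : z ≠ y) : ¬ Matched M z := by
  rintro ⟨w, hw⟩
  rcases hz w hw with rfl | rfl
  · exact hzy (hM.partner_unique (mk_mem_comm.mp hw) hxy)
  · exact hzx (hM.partner_unique (mk_mem_comm.mp hw) (mk_mem_comm.mp hxy))

lemma insert {A : Set (Sym2 W)} (hA : IsMatching G A) (h : G.Adj v w)
    (hv : ∀ e ∈ A, v ∉ e) (hw : ∀ e ∈ A, w ∉ e) : IsMatching G (insert s(v, w) A) := by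
  refine ⟨Set.insert_subset h hA.1, ?_⟩
  have hout : ∀ e ∈ A, ∀ x ∈ s(v, w), x ∉ e := fun e he x hx => by
    rcases Sym2.mem_iff.mp hx with rfl | rfl
    exacts [hv e he, hw e he]
  rintro e (rfl | he) e' (rfl | he') hne x hx hx'
  · exact hne rfl
  · exact hout e' he' x hx hx'
  · exact hout e he x hx' hx
  · exact hA.2 e he e' he' hne x hx hx'

end IsMatching

lemma isMatching_singleton {W : Type u} {G : SimpleGraph W} {v w : W} (h : G.Adj v w) :
    IsMatching G {s(v, w)} :=
  ⟨by simpa using h, fun e he e' he' hne => absurd (he.trans he'.symm) hne⟩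

section Rank

variable {W : Type u} {G : SimpleGraph W} {pref : W → W → ℕ} {M M' : Set (Sym2 W)} {v w : W}

lemma rank_eq_of_mem (hM : IsMatching G M) (h : s(v, w) ∈ M) :
    rank G pref M v = pref v w := by
  have hex : ∃ w, s(v, w) ∈ M := ⟨w, h⟩
  rw [rank, dif_pos hex, hM.partner_unique hex.choose_spec h]

lemma rank_of_not_matched (h : ¬ Matched M v) :
    rank G pref M v = (G.neighborSet v).ncard + 1 :=
  dif_neg h

lemma rank_congr (h : ∀ w, s(v, w) ∈ M ↔ s(v, w) ∈ M') :
    rank G pref M v = rank G pref M' v := by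
  have hM : (fun w => s(v, w) ∈ M) = fun w => s(v, w) ∈ M' := funext fun w => propext (h w)
  unfold rank
  rw [hM]

lemma lt_rank_of_forall_mem [Finite W] (hM : IsMatching G M) {n : ℕ}
    (hdeg : n ≤ (G.neighborSet v).ncard) (h : ∀ w, s(v, w) ∈ M → n < pref v w) :
    n < rank G pref M v := by
  by_cases hv : Matched M v
  · obtain ⟨w, hw⟩ := hv
    rw [rank_eq_of_mem hM hw]
    exact h w hw
  · rw [rank_of_not_matched hv]
    omega

end Rank

section Overwrite

variable {W : Type u} {G : SimpleGraph W} {pref : W → W → ℕ} {M A : Set (Sym2 W)}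

def overwrite (M A : Set (Sym2 W)) : Set (Sym2 W) :=
  {e ∈ M | ∀ v ∈ e, ∀ a ∈ A, v ∉ a} ∪ A

lemma IsMatching.overwrite (hM : IsMatching G M) (hA : IsMatching G A) :
    IsMatching G (overwrite M A) := by
  refine ⟨Set.union_subset (fun e he => hM.1 he.1) hA.1, ?_⟩
  rintro e (he | he) e' (he' | he') hne v hv hv'
  · exact hM.2 e he.1 e' he'.1 hne v hv hv'
  · exact he.2 v hv e' he' hv'
  · exact he'.2 v hv' e he hv
  · exact hA.2 e he e' he' hne v hv hv'

lemma subset_overwrite : A ⊆ overwrite M A := Set.subset_union_right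

theorem IsPopular.ncard_le_of_overwrite [Finite W] (hM : IsPopular G pref M)
    (hA : IsMatching G A) {Plus Minus : Set W}
    (hPlus : ∀ v ∈ Plus, rank G pref (overwrite M A) v < rank G pref M v)
    (hcov : ∀ e ∈ A, ∀ v ∈ e, v ∈ Plus ∪ Minus ∧ ∀ w, s(v, w) ∈ M → w ∈ Plus ∪ Minus) :
    Plus.ncard ≤ Minus.ncard := by
  have hM' := hM.1.overwrite hA
  have hsame : ∀ v ∉ Plus ∪ Minus, rank G pref M v = rank G pref (overwrite M A) v := by
    intro v hv
    refine rank_congr fun w => ⟨fun hw => Or.inl ⟨hw, ?_⟩, ?_⟩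
    · intro x hx e he hxe
      rcases Sym2.mem_iff.mp hx with rfl | rfl
      · exact hv (hcov e he x hxe).1
      · exact hv ((hcov e he x hxe).2 v (mk_mem_comm.mp hw))
    · rintro (hw | hw)
      · exact hw.1
      · exact absurd (hcov _ hw v (Sym2.mem_mk_left v w)).1 hv
  have hgain : Plus.ncard ≤ vote G pref (overwrite M A) M :=
    Set.ncard_le_ncard hPlus (Set.toFinite _)
  have hloss : vote G pref M (overwrite M A) ≤ Minus.ncard := by
    refine Set.ncard_le_ncard (fun v hv => ?_) (Set.toFinite _)
    by_contra hvm
    by_cases hvp : v ∈ Plus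
    · exact lt_asymm hv (hPlus v hvp)
    · exact (ne_of_lt hv) (hsame v (by simp [hvp, hvm]))
  have := hM.2 _ hM'
  omega

end Overwrite

namespace IsPopular

variable {W : Type u} [Finite W] {G : SimpleGraph W} {pref : W → W → ℕ} {M : Set (Sym2 W)}

theorem false_of_blocking_edge_of_not_matched (hM : IsPopular G pref M) {q r : W}
    (hqr : G.Adj q r) (hr : ¬ Matched M r)
    (hq : pref q r < rank G pref M q) (hr' : pref r q < rank G pref M r) : False := by
  have hA := isMatching_singleton hqr
  have hM' := hM.1.overwrite hA
  have hmem : s(q, r) ∈ overwrite M {s(q, r)} := subset_overwrite rfl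
  have hmem' : s(r, q) ∈ overwrite M {s(q, r)} := subset_overwrite Sym2.eq_swap
  have key := hM.ncard_le_of_overwrite hA (Plus := {q, r}) (Minus := {w | s(q, w) ∈ M}) ?_ ?_
  · rw [Set.ncard_pair hqr.ne] at key
    have := hM.1.ncard_partners_le_one q
    omega
  · rintro v (rfl | rfl)
    · rwa [rank_eq_of_mem hM' hmem]
    · rwa [rank_eq_of_mem hM' hmem']
  · rintro e rfl v hv
    rcases Sym2.mem_iff.mp hv with rfl | rfl
    · exact ⟨by simp, fun w hw => Or.inr hw⟩
    · exact ⟨by simp, fun w hw => absurd ⟨w, hw⟩ hr⟩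

theorem false_of_blocking_edges_of_mem (hM : IsPopular G pref M) {x₁ y₁ x₂ y₂ : W}
    (h₁ : G.Adj x₁ y₁) (h₂ : G.Adj x₂ y₂) (hm : s(y₁, x₂) ∈ M) (hne : x₁ ≠ y₂)
    (hx₁ : pref x₁ y₁ < rank G pref M x₁) (hy₁ : pref y₁ x₁ < rank G pref M y₁)
    (hx₂ : pref x₂ y₂ < rank G pref M x₂) (hy₂ : pref y₂ x₂ < rank G pref M y₂) : False := by
  have hm' := mk_mem_comm.mp hm
  have hx₁₂ : x₁ ≠ x₂ := by
    rintro rfl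
    rw [rank_eq_of_mem hM.1 hm'] at hx₁
    exact lt_irrefl _ hx₁
  have hy₁₂ : y₁ ≠ y₂ := by
    rintro rfl
    rw [rank_eq_of_mem hM.1 hm] at hy₂
    exact lt_irrefl _ hy₂
  have hyx := (hM.1.adj hm).ne
  have hA : IsMatching G {s(x₁, y₁), s(x₂, y₂)} :=
    (isMatching_singleton h₂).insert h₁ (by simp [hx₁₂, hne]) (by simp [hyx, hy₁₂])
  have hM' := hM.1.overwrite hA
  have key := hM.ncard_le_of_overwrite hA (Plus := {x₁, y₁, x₂, y₂})
    (Minus := {w | s(x₁, w) ∈ M} ∪ {w | s(y₂, w) ∈ M}) ?_ ?_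
  · rw [Set.ncard_insert_of_notMem (by simp [h₁.ne, hx₁₂, hne]),
      Set.ncard_insert_of_notMem (by simp [hyx, hy₁₂]), Set.ncard_pair h₂.ne] at key
    have := (Set.ncard_union_le _ _).trans
      (add_le_add (hM.1.ncard_partners_le_one x₁) (hM.1.ncard_partners_le_one y₂))
    omega
  · have hrank : ∀ v w, s(v, w) ∈ ({s(x₁, y₁), s(x₂, y₂)} : Set (Sym2 W)) →
        rank G pref (overwrite M _) v = pref v w :=
      fun v w h => rank_eq_of_mem hM' (subset_overwrite h)
    rintro v (rfl | rfl | rfl | rfl)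
    · rwa [hrank v y₁ (by simp)]
    · rwa [hrank v x₁ (by simp)]
    · rwa [hrank v y₂ (by simp)]
    · rwa [hrank v x₂ (by simp)]
  · rintro e (rfl | rfl) v hv <;> rcases Sym2.mem_iff.mp hv with rfl | rfl
    · exact ⟨by simp, fun w hw => Or.inr (Or.inl hw)⟩
    · exact ⟨by simp, fun w hw => by simp [hM.1.partner_unique hw hm]⟩
    · exact ⟨by simp, fun w hw => by simp [hM.1.partner_unique hw hm']⟩
    · exact ⟨by simp, fun w hw => Or.inr (Or.inr hw)⟩

lemma false_of_cyclic_triangle_of_mem (hM : IsPopular G pref M) {x y z : W}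
    (hzx : G.Adj z x) (hxy : x ≠ y) (hz : pref z x < pref z y)
    (hxd : pref x z ≤ (G.neighborSet x).ncard) (hxM : ∀ w, s(x, w) ∈ M → w = y ∨ w = z)
    (hyz : s(y, z) ∈ M) : False := by
  have hx := hM.1.not_matched_of_mem hyz hxM hxy hzx.ne.symm
  refine hM.false_of_blocking_edge_of_not_matched hzx hx ?_ ?_
  · rwa [rank_eq_of_mem hM.1 (mk_mem_comm.mp hyz)]
  · rw [rank_of_not_matched hx]
    omega

/-- `pref x z ≤ (G.neighborSet x).ncard` says that `x` prefers `z` to being unmatched. -/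
theorem false_of_cyclic_triangle (hM : IsPopular G pref M) {x y z : W}
    (hxy : G.Adj x y) (hyz : G.Adj y z) (hzx : G.Adj z x)
    (hx : pref x y < pref x z) (hy : pref y z < pref y x) (hz : pref z x < pref z y)
    (hxd : pref x z ≤ (G.neighborSet x).ncard) (hyd : pref y x ≤ (G.neighborSet y).ncard)
    (hzd : pref z y ≤ (G.neighborSet z).ncard)
    (hxM : ∀ w, s(x, w) ∈ M → w = y ∨ w = z) (hyM : ∀ w, s(y, w) ∈ M → w = z ∨ w = x)
    (hzM : ∀ w, s(z, w) ∈ M → w = x ∨ w = y) : False := by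
  by_cases hyz' : s(y, z) ∈ M
  · exact hM.false_of_cyclic_triangle_of_mem hzx hxy.ne hz hxd hxM hyz'
  by_cases hzx' : s(z, x) ∈ M
  · exact hM.false_of_cyclic_triangle_of_mem hxy hyz.ne hx hyd hyM hzx'
  by_cases hxy' : s(x, y) ∈ M
  · exact hM.false_of_cyclic_triangle_of_mem hyz hzx.ne hy hzd hzM hxy'
  have hxfree : ¬ Matched M x := by
    rintro ⟨w, hw⟩
    rcases hxM w hw with rfl | rfl
    · exact hxy' hw
    · exact hzx' (mk_mem_comm.mp hw)
  have hyfree : ¬ Matched M y := by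
    rintro ⟨w, hw⟩
    rcases hyM w hw with rfl | rfl
    · exact hyz' hw
    · exact hxy' (mk_mem_comm.mp hw)
  refine hM.false_of_blocking_edge_of_not_matched hxy hyfree ?_ ?_
  · rw [rank_of_not_matched hxfree]
    omega
  · rw [rank_of_not_matched hyfree]
    omega

end IsPopular

instance (V : Type u) [Finite V] : Finite (Gad V) := by
  refine Finite.of_injective (fun g : Gad V => match g with
    | .a i => ((0 : Fin 6), i, i) | .b i => (1, i, i) | .c i => (2, i, i)
    | .d i => (3, i, i) | .u i j => (4, i, j) | .f i j => (5, i, j)) ?_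
  intro g g' h
  cases g <;> cases g' <;> simp_all

namespace Reduction

variable {V : Type u} [LinearOrder V] (R : Reduction V)

instance : Finite R.HV :=
  have := R.ispvc.1
  Subtype.finite

@[simp] lemma va_val (x : V) : (R.va x).val = .a x := rfl
@[simp] lemma vb_val (x : V) : (R.vb x).val = .b x := rfl
@[simp] lemma vc_val (x : V) : (R.vc x).val = .c x := rfl
@[simp] lemma vd_val (x : V) : (R.vd x).val = .d x := rfl
@[simp] lemma vu_val (x y : V) (h : R.G.Adj x y) : (R.vu x y h).val = .u x y := rfl

lemma adj_va_vb (x : V) : R.H.Adj (R.va x) (R.vb x) :=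
  ⟨by simp [Subtype.ext_iff], Or.inl (.ab x)⟩

lemma adj_va_vc (x : V) : R.H.Adj (R.va x) (R.vc x) :=
  ⟨by simp [Subtype.ext_iff], Or.inl (.ac x)⟩

lemma adj_vb_vc (x : V) : R.H.Adj (R.vb x) (R.vc x) :=
  ⟨by simp [Subtype.ext_iff], Or.inl (.bc x)⟩

lemma adj_vb_vu {x y : V} (h : R.G.Adj x y) : R.H.Adj (R.vb x) (R.vu x y h) :=
  ⟨by simp [Subtype.ext_iff], Or.inl (.bu h)⟩

lemma adj_vu_vu {x y : V} (h : R.G.Adj x y) : R.H.Adj (R.vu x y h) (R.vu y x h.symm) :=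
  ⟨by simp [Subtype.ext_iff, h.ne], Or.inl (.uu h)⟩

lemma adj_vc_vc {t : Finset V} (ht : t ∈ R.T) {x y : V} (hx : x ∈ t) (hy : y ∈ t)
    (hne : x ≠ y) : R.H.Adj (R.vc x) (R.vc y) :=
  ⟨by simp [Subtype.ext_iff, hne], Or.inl (.cc ht hx hy hne)⟩

lemma neighborSet_va_subset (x : V) :
    R.H.neighborSet (R.va x) ⊆ {R.vb x, R.vc x, R.vd x} := by
  rintro ⟨g, hg⟩ ⟨-, h | h⟩
  · cases h
    · exact Or.inl rfl
    · exact Or.inr (Or.inl rfl)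
  · cases h
    exact Or.inr (Or.inr rfl)

lemma neighborSet_vb_subset (x : V) :
    R.H.neighborSet (R.vb x) ⊆
      {R.va x, R.vc x} ∪ {g | ∃ y, ∃ h : R.G.Adj x y, g = R.vu x y h} := by
  rintro ⟨g, hg⟩ ⟨-, h | h⟩
  · cases h with
    | bc => exact Or.inl (Or.inr rfl)
    | bu hy => exact Or.inr ⟨_, hy, rfl⟩
  · cases h
    exact Or.inl (Or.inl rfl)

lemma neighborSet_vu_subset {x y : V} (h : R.G.Adj x y) :
    R.H.neighborSet (R.vu x y h) ⊆ {R.vu y x h.symm, R.vb x} := by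
  rintro ⟨g, hg⟩ ⟨-, h | h⟩
  · cases h
    exact Or.inl rfl
  · cases h with
    | uu => exact Or.inl rfl
    | bu => exact Or.inr rfl

lemma card_eq_three {t : Finset V} (ht : t ∈ R.T) : t.card = 3 :=
  R.ispvc.2.2.2.1 t ht

lemma adj_of_mem_triple {t : Finset V} (ht : t ∈ R.T) {x y : V} (hx : x ∈ t) (hy : y ∈ t)
    (hne : x ≠ y) : R.G.Adj x y :=
  R.ispvc.2.2.2.2.1 t ht x hx y hy hne

lemma notMem_of_mem_triple {t : Finset V} (ht : t ∈ R.T) {x : V} (hx : x ∈ t) {e : Sym2 V}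
    (he : e ∈ R.P) : x ∉ e :=
  fun hxe => R.ispvc.2.2.2.2.2.2.2 x ⟨⟨e, he, hxe⟩, ⟨t, ht, hx⟩⟩

lemma triple_eq_of_mem {t t' : Finset V} (ht : t ∈ R.T) (ht' : t' ∈ R.T) {x : V}
    (hx : x ∈ t) (hx' : x ∈ t') : t = t' := by
  by_contra hne
  exact R.ispvc.2.2.2.2.2.1 t ht t' ht' hne x hx hx'

lemma neighborSet_vc_subset {t : Finset V} (ht : t ∈ R.T) {x : V} (hx : x ∈ t) :
    R.H.neighborSet (R.vc x) ⊆ {R.va x, R.vb x} ∪ R.vc '' (↑t \ {x}) := by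
  rintro ⟨g, hg⟩ ⟨-, h | h⟩
  · cases h with
    | cd hp => exact absurd (Sym2.mem_mk_left _ _) (R.notMem_of_mem_triple ht hx hp)
    | cc ht' hi hj hne =>
      obtain rfl := R.triple_eq_of_mem ht' ht hi hx
      exact Or.inr ⟨_, ⟨hj, Ne.symm hne⟩, rfl⟩
  · cases h with
    | ac => exact Or.inl (Or.inl rfl)
    | bc => exact Or.inl (Or.inr rfl)
    | fc hp => exact absurd (Sym2.mem_mk_right _ _) (R.notMem_of_mem_triple ht hx hp)
    | cc ht' hi hj hne =>
      obtain rfl := R.triple_eq_of_mem ht' ht hj hx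
      exact Or.inr ⟨_, ⟨hi, hne⟩, rfl⟩

@[simp] lemma prefH_va_vb (x : V) : R.prefH (R.va x) (R.vb x) = 1 := R.pref_ab x
@[simp] lemma prefH_va_vc (x : V) : R.prefH (R.va x) (R.vc x) = 2 := R.pref_ac x
@[simp] lemma prefH_va_vd (x : V) : R.prefH (R.va x) (R.vd x) = 3 := R.pref_ad x
@[simp] lemma prefH_vb_va (x : V) : R.prefH (R.vb x) (R.va x) = 1 := R.pref_ba x
@[simp] lemma prefH_vb_vc (x : V) :
    R.prefH (R.vb x) (R.vc x) = (R.G.neighborSet x).ncard + 2 := R.pref_bc x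
@[simp] lemma prefH_vc_va (x : V) : R.prefH (R.vc x) (R.va x) = 1 := R.pref_ca x
@[simp] lemma prefH_vc_vb (x : V) : R.prefH (R.vc x) (R.vb x) = 2 := R.pref_cb x
@[simp] lemma prefH_vu_vu {x y : V} (h : R.G.Adj x y) :
    R.prefH (R.vu x y h) (R.vu y x h.symm) = 1 := R.pref_uu x y h
@[simp] lemma prefH_vu_vb {x y : V} (h : R.G.Adj x y) :
    R.prefH (R.vu x y h) (R.vb x) = 2 := R.pref_ub x y h

lemma prefH_vb_vu_mem {x y : V} (h : R.G.Adj x y) :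
    R.prefH (R.vb x) (R.vu x y h) ∈ Set.Icc 2 ((R.G.neighborSet x).ncard + 1) :=
  (R.pref_bu x).mapsTo ⟨y, h, rfl⟩

variable {R} {M : Set (Sym2 R.HV)}

lemma one_lt_rank_va (hM : IsMatching R.H M) {x : V} (hab : s(R.va x, R.vb x) ∉ M) :
    1 < rank R.H R.prefH M (R.va x) := by
  refine lt_rank_of_forall_mem hM ((Set.ncard_pos).mpr ⟨_, R.adj_va_vb x⟩) fun w hw => ?_
  rcases R.neighborSet_va_subset x (hM.adj hw) with rfl | rfl | rfl
  · exact absurd hw hab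
  · simp
  · simp

lemma one_lt_rank_vb (hM : IsMatching R.H M) {x : V} (hab : s(R.va x, R.vb x) ∉ M) :
    1 < rank R.H R.prefH M (R.vb x) := by
  refine lt_rank_of_forall_mem hM ((Set.ncard_pos).mpr ⟨_, (R.adj_va_vb x).symm⟩) fun w hw => ?_
  rcases R.neighborSet_vb_subset x (hM.adj hw) with (rfl | rfl) | ⟨y, hy, rfl⟩
  · exact absurd (mk_mem_comm.mp hw) hab
  · simp
  · exact (R.prefH_vb_vu_mem hy).1

lemma one_lt_rank_vu (hM : IsMatching R.H M) {x y : V} (h : R.G.Adj x y)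
    (huu : s(R.vu x y h, R.vu y x h.symm) ∉ M) : 1 < rank R.H R.prefH M (R.vu x y h) := by
  refine lt_rank_of_forall_mem hM ((Set.ncard_pos).mpr ⟨_, R.adj_vu_vu h⟩) fun w hw => ?_
  rcases R.neighborSet_vu_subset h (hM.adj hw) with rfl | rfl
  · exact absurd hw huu
  · simp

lemma ab_mem_or_ad_bc_mem (hM : IsPopular R.H R.prefH M) (x : V) :
    s(R.va x, R.vb x) ∈ M ∨ s(R.va x, R.vd x) ∈ M ∧ s(R.vb x, R.vc x) ∈ M := by
  refine or_iff_not_imp_left.mpr fun hab => ?_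
  have ha := one_lt_rank_va hM.1 hab
  have hb := one_lt_rank_vb hM.1 hab
  by_cases hbm : Matched M (R.vb x)
  swap
  · exact (hM.false_of_blocking_edge_of_not_matched (R.adj_va_vb x) hbm (by simpa) (by simpa)).elim
  obtain ⟨w, hw⟩ := hbm
  rcases R.neighborSet_vb_subset x (hM.1.adj hw) with (rfl | rfl) | ⟨y, hy, rfl⟩
  · exact absurd (mk_mem_comm.mp hw) hab
  · by_cases ham : Matched M (R.va x)
    swap
    · refine (hM.false_of_blocking_edge_of_not_matched (R.adj_va_vb x).symm ham ?_ ?_).elim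
      · simp [rank_eq_of_mem hM.1 hw]
      · simpa
    obtain ⟨w', hw'⟩ := ham
    rcases R.neighborSet_va_subset x (hM.1.adj hw') with rfl | rfl | rfl
    · exact absurd hw' hab
    · have := hM.1.partner_unique (mk_mem_comm.mp hw) (mk_mem_comm.mp hw')
      simp [Subtype.ext_iff] at this
    · exact ⟨hw', hw⟩
  · have huu : s(R.vu y x hy.symm, R.vu x y hy) ∉ M := fun h => by
      have := hM.1.partner_unique (mk_mem_comm.mp hw) (mk_mem_comm.mp h)
      simp [Subtype.ext_iff] at this
    refine (hM.false_of_blocking_edges_of_mem (R.adj_va_vb x) (R.adj_vu_vu hy) hw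
      (by simp [Subtype.ext_iff]) (by simpa) (by simpa) ?_ ?_).elim
    · simp [rank_eq_of_mem hM.1 (mk_mem_comm.mp hw)]
    · simpa using one_lt_rank_vu hM.1 _ huu

lemma rank_lt_of_ad_bc_mem {M' : Set (Sym2 R.HV)} (hM : IsMatching R.H M)
    (hM' : IsMatching R.H M') {x y : V} (hxy : R.G.Adj x y) (had : s(R.va x, R.vd x) ∈ M)
    (hbc : s(R.vb x, R.vc x) ∈ M) (hac' : s(R.va x, R.vc x) ∈ M')
    (hbu' : s(R.vb x, R.vu x y hxy) ∈ M') :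
    ∀ v ∈ ({R.va x, R.vb x, R.vc x} : Set R.HV), rank R.H R.prefH M' v < rank R.H R.prefH M v := by
  rintro v (rfl | rfl | rfl)
  · rw [rank_eq_of_mem hM' hac', rank_eq_of_mem hM had]
    simp
  · rw [rank_eq_of_mem hM' hbu', rank_eq_of_mem hM hbc, prefH_vb_vc]
    have := (R.prefH_vb_vu_mem hxy).2
    omega
  · rw [rank_eq_of_mem hM' (mk_mem_comm.mp hac'), rank_eq_of_mem hM (mk_mem_comm.mp hbc)]
    simp

lemma false_of_adj_of_ad_bc_mem (hM : IsPopular R.H R.prefH M) {x y : V} (hxy : R.G.Adj x y)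
    (hadx : s(R.va x, R.vd x) ∈ M) (hbcx : s(R.vb x, R.vc x) ∈ M)
    (hady : s(R.va y, R.vd y) ∈ M) (hbcy : s(R.vb y, R.vc y) ∈ M) : False := by
  have hne := hxy.ne
  set A : Set (Sym2 R.HV) := {s(R.va x, R.vc x), s(R.vb x, R.vu x y hxy),
    s(R.va y, R.vc y), s(R.vb y, R.vu y x hxy.symm)}
  have hA : IsMatching R.H A := by
    refine ((((isMatching_singleton (R.adj_vb_vu hxy.symm)).insert (R.adj_va_vc y) ?_ ?_).insert
      (R.adj_vb_vu hxy) ?_ ?_).insert (R.adj_va_vc x) ?_ ?_) <;> simp [Subtype.ext_iff, hne]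
  have hM' := hM.1.overwrite hA
  have key := hM.ncard_le_of_overwrite hA
    (Plus := {R.va x, R.vb x, R.vc x, R.va y, R.vb y, R.vc y})
    (Minus := {R.vd x, R.vd y, R.vu x y hxy, R.vu y x hxy.symm}) ?_ ?_
  · have hPlus : ({R.va x, R.vb x, R.vc x, R.va y, R.vb y, R.vc y} : Set R.HV).ncard = 6 := by
      rw [Set.ncard_insert_of_notMem, Set.ncard_insert_of_notMem, Set.ncard_insert_of_notMem,
        Set.ncard_insert_of_notMem, Set.ncard_pair] <;> simp [Subtype.ext_iff, hne]
    have hMinus : ({R.vd x, R.vd y, R.vu x y hxy, R.vu y x hxy.symm} : Set R.HV).ncard = 4 := by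
      rw [Set.ncard_insert_of_notMem, Set.ncard_insert_of_notMem, Set.ncard_pair] <;>
        simp [Subtype.ext_iff, hne, hne.symm]
    omega
  · have hx := R.rank_lt_of_ad_bc_mem hM.1 hM' hxy hadx hbcx (subset_overwrite (by simp [A]))
      (subset_overwrite (by simp [A]))
    have hy := R.rank_lt_of_ad_bc_mem hM.1 hM' hxy.symm hady hbcy (subset_overwrite (by simp [A]))
      (subset_overwrite (by simp [A]))
    rintro v (rfl | rfl | rfl | hv)
    exacts [hx _ (by simp), hx _ (by simp), hx _ (by simp), hy _ hv]
  · rintro e (rfl | rfl | rfl | rfl) v hv <;> rcases Sym2.mem_iff.mp hv with rfl | rfl <;>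
      refine ⟨by simp, fun w hw => ?_⟩
    · simp [hM.1.partner_unique hw hadx]
    · simp [hM.1.partner_unique hw (mk_mem_comm.mp hbcx)]
    · simp [hM.1.partner_unique hw hbcx]
    · rcases R.neighborSet_vu_subset hxy (hM.1.adj hw) with rfl | rfl <;> simp
    · simp [hM.1.partner_unique hw hady]
    · simp [hM.1.partner_unique hw (mk_mem_comm.mp hbcy)]
    · simp [hM.1.partner_unique hw hbcy]
    · rcases R.neighborSet_vu_subset hxy.symm (hM.1.adj hw) with rfl | rfl <;> simp

lemma four_le_ncard_neighborSet_vc {t : Finset V} (ht : t ∈ R.T) {x y z : V} (hx : x ∈ t)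
    (hy : y ∈ t) (hz : z ∈ t) (hxy : x ≠ y) (hxz : x ≠ z) (hyz : y ≠ z) :
    4 ≤ (R.H.neighborSet (R.vc x)).ncard := by
  have hsub : {R.va x, R.vb x, R.vc y, R.vc z} ⊆ R.H.neighborSet (R.vc x) := by
    rintro g (rfl | rfl | rfl | rfl)
    exacts [(R.adj_va_vc x).symm, (R.adj_vb_vc x).symm, R.adj_vc_vc ht hx hy hxy,
      R.adj_vc_vc ht hx hz hxz]
  refine le_of_eq_of_le ?_ (Set.ncard_le_ncard hsub)
  rw [Set.ncard_insert_of_notMem, Set.ncard_insert_of_notMem, Set.ncard_pair] <;>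
    simp [Subtype.ext_iff, hyz]

lemma not_forall_ab_mem (hM : IsPopular R.H R.prefH M) {t : Finset V} (ht : t ∈ R.T) :
    ¬ ∀ x ∈ t, s(R.va x, R.vb x) ∈ M := by
  intro hab
  have hpart : ∀ x ∈ t, ∀ w, s(R.vc x, w) ∈ M → ∃ y ∈ t, y ≠ x ∧ w = R.vc y := by
    intro x hx w hw
    rcases R.neighborSet_vc_subset ht hx (hM.1.adj hw) with (rfl | rfl) | ⟨y, ⟨hy, hyx⟩, rfl⟩
    · have := hM.1.partner_unique (mk_mem_comm.mp hw) (hab x hx)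
      simp [Subtype.ext_iff] at this
    · have := hM.1.partner_unique (mk_mem_comm.mp hw) (mk_mem_comm.mp (hab x hx))
      simp [Subtype.ext_iff] at this
    · exact ⟨y, hy, hyx, rfl⟩
  obtain ⟨i, j, k, hij, hjk, rfl⟩ := Finset.exists_lt_lt_eq_of_card_eq_three (R.card_eq_three ht)
  have hik := hij.trans hjk
  obtain ⟨p₁, p₂, p₃, p₄, p₅, p₆, -⟩ := R.pref_tri _ ht i j k rfl hij hjk
  have hi : i ∈ ({i, j, k} : Finset V) := by simp
  have hj : j ∈ ({i, j, k} : Finset V) := by simp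
  have hk : k ∈ ({i, j, k} : Finset V) := by simp
  refine hM.false_of_cyclic_triangle (x := R.vc i) (y := R.vc k) (z := R.vc j)
    (R.adj_vc_vc ht hi hk hik.ne) (R.adj_vc_vc ht hk hj hjk.ne') (R.adj_vc_vc ht hj hi hij.ne')
    (by simp [prefH, p₁, p₂]) (by simp [prefH, p₅, p₆]) (by simp [prefH, p₃, p₄]) ?_ ?_ ?_ ?_ ?_ ?_
  · simpa [prefH, p₂] using R.four_le_ncard_neighborSet_vc ht hi hj hk hij.ne hik.ne hjk.ne
  · simpa [prefH, p₆] using R.four_le_ncard_neighborSet_vc ht hk hi hj hik.ne' hjk.ne' hij.ne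
  · simpa [prefH, p₄] using R.four_le_ncard_neighborSet_vc ht hj hi hk hij.ne' hjk.ne hik.ne
  all_goals
    intro w hw
    obtain ⟨y, hy, hyx, rfl⟩ := hpart _ (by assumption) w hw
    simp only [Finset.mem_insert, Finset.mem_singleton] at hy
    simp only [Subtype.ext_iff, vc_val, Gad.c.injEq]
    tauto

end Reduction

/-- If `M` is a popular matching in `H` and `U = {i : {a_i, b_i} ∈ M}`, then
`|U ∩ T| = 2` for every triple `T ∈ 𝒯`. -/
theorem popular_triple_count {V : Type u} [LinearOrder V] (R : Reduction V)
    (M : Set (Sym2 R.HV)) (hM : IsPopular R.H R.prefH M) :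
    ∀ t ∈ R.T, {x : V | x ∈ t ∧ s(R.va x, R.vb x) ∈ M}.ncard = 2 := by
  classical
  intro t ht
  set isOpen : V → Prop := fun x => s(R.va x, R.vb x) ∈ M
  have hle : (t.filter (¬ isOpen ·)).card ≤ 1 := by
    refine Finset.card_le_one.mpr fun x hx y hy => by_contra fun hne => ?_
    rw [Finset.mem_filter] at hx hy
    obtain ⟨hxd, hxc⟩ := (R.ab_mem_or_ad_bc_mem hM x).resolve_left hx.2
    obtain ⟨hyd, hyc⟩ := (R.ab_mem_or_ad_bc_mem hM y).resolve_left hy.2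
    exact R.false_of_adj_of_ad_bc_mem hM (R.adj_of_mem_triple ht hx.1 hy.1 hne) hxd hxc hyd hyc
  have hpos : 0 < (t.filter (¬ isOpen ·)).card := by
    obtain ⟨x, hx, hxo⟩ := not_forall₂.mp (R.not_forall_ab_mem hM ht)
    exact Finset.card_pos.mpr ⟨x, Finset.mem_filter.mpr ⟨hx, hxo⟩⟩
  have hsplit := Finset.card_filter_add_card_filter_not (s := t) isOpen
  rw [R.card_eq_three ht] at hsplit
  rw [← Finset.coe_filter, Set.ncard_coe_finset]
  change (t.filter isOpen).card = 2
  omega
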